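/- Define mutation of a pair (B, X), where B is an n×n antisymmetric integer matrix and X = (X₁,…,X_n) is a tuple of nonzero elements of a field, at a node k by: X ↦ μ_k(X) with μ_k(X)_k = X_k^{−1} and μ_k(X)_j = X_j·(1 + X_k^{sgn B_{jk}})^{B_{jk}} for j ≠ k (integer powers, using the matrix B current at the time of the mutation), while B ↦ μ_k(B) with μ_k(B)_{ij} = −B_{ij} if i = k or j = k and μ_k(B)_{ij} = B_{ij} + (B_{ik}|B_{kj}| + |B_{ik}|B_{kj})/2 otherwise. Let B^X be the 8×8 matrix with B^X_{ij} = 1 if (i,j) ∈ {1,2}×{3,4} ∪ {3,4}×{5,6} ∪ {5,6}×{7,8} ∪ {7,8}×{1,2}, B^X_{ij} = −1 if (j,i) lies in that set, and 0 otherwise. In the rational function field ℚ(x₁,…,x₈) (the fraction field of the polynomial ring in eight variables), start from (B^X, (x₁,…,x₈)), apply the mutations μ₅, μ₁, μ₆, μ₂, μ₇, μ₃, μ₈, μ₄ successively in this order, and relabel the nodes by ρ = (1 2)(3 4)(5 6)(7 8), passing to X''_i = X_{ρ(i)}. Then: X''₃ = (1+x₁^{−1})(1+x₂^{−1}) / (x₄(1+x₅)(1+x₆)),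 X''₄ = (1+x₁^{−1})(1+x₂^{−1}) / (x₃(1+x₅)(1+x₆)), X''₇ = (1+x₅^{−1})(1+x₆^{−1}) / (x₈(1+x₁)(1+x₂)), and X''₈ = (1+x₅^{−1})(1+x₆^{−1}) / (x₇(1+x₁)(1+x₂)). -/
import Mathlib


open Matrix

set_option maxHeartbeats 2000000

noncomputable section

/-- Quiver (matrix) mutation at node `k`. -/
def mutB {n : ℕ} (B : Matrix (Fin n) (Fin n) ℤ) (k : Fin n) : Matrix (Fin n) (Fin n) ℤ :=
  fun i j => if i = k ∨ j = k then -B i j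
    else B i j + (B i k * |B k j| + |B i k| * B k j) / 2

/-- X-cluster mutation at node `k`: `μ_k(X)_k = X_k⁻¹` and
`μ_k(X)_j = X_j·(1 + X_k^(sgn B_{jk}))^(B_{jk})` for `j ≠ k` (integer powers). -/
def mutX {n : ℕ} {K : Type*} [Field K] (B : Matrix (Fin n) (Fin n) ℤ) (X : Fin n → K)
    (k : Fin n) : Fin n → K :=
  fun j => if j = k then (X k)⁻¹
    else X j * (1 + X k ^ (B j k).sign) ^ (B j k)

/-- One mutation step on a pair (matrix, X-cluster variables). -/
def mutStepX {n : ℕ} {K : Type*} [Field K] (p : Matrix (Fin n) (Fin n) ℤ × (Fin n → K))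
    (k : Fin n) : Matrix (Fin n) (Fin n) ℤ × (Fin n → K) :=
  (mutB p.1 k, mutX p.1 p.2 k)

/-- The antisymmetrized adjacency matrix of the local dP₅ BPS quiver in the X-cluster
convention: `B^X_{ij} = 1` iff `(i,j) ∈ {1,2}×{3,4} ∪ {3,4}×{5,6} ∪ {5,6}×{7,8} ∪ {7,8}×{1,2}`
(1-indexed), `-1` for transposed pairs, `0` otherwise. -/
def BXdP5 : Matrix (Fin 8) (Fin 8) ℤ :=
  !![0, 0, 1, 1, 0, 0, -1, -1;
     0, 0, 1, 1, 0, 0, -1, -1;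
     -1, -1, 0, 0, 1, 1, 0, 0;
     -1, -1, 0, 0, 1, 1, 0, 0;
     0, 0, -1, -1, 0, 0, 1, 1;
     0, 0, -1, -1, 0, 0, 1, 1;
     1, 1, 0, 0, -1, -1, 0, 0;
     1, 1, 0, 0, -1, -1, 0, 0]

/-- The rational function field `ℚ(x₁,…,x₈)`. -/
abbrev K8 : Type := FractionRing (MvPolynomial (Fin 8) ℚ)

/-- The variables `x₁,…,x₈` of the rational function field. -/
def xv : Fin 8 → K8 := fun i => algebraMap (MvPolynomial (Fin 8) ℚ) K8 (MvPolynomial.X i)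

/-- The mutation sequence μ₅, μ₁, μ₆, μ₂, μ₇, μ₃, μ₈, μ₄ (0-indexed nodes). -/
def muSeqX : List (Fin 8) := [4, 0, 5, 1, 6, 2, 7, 3]

/-- Result of applying the mutation sequence to `(B^X, (x₁,…,x₈))`. -/
def resX : Matrix (Fin 8) (Fin 8) ℤ × (Fin 8 → K8) :=
  muSeqX.foldl mutStepX (BXdP5, xv)

/-- The relabelling permutation ρ = (1 2)(3 4)(5 6)(7 8), 0-indexed. -/
def ρX : Fin 8 → Fin 8 := ![1, 0, 3, 2, 5, 4, 7, 6]

lemma vec8_0 {α : Type*} (a b c d e f g h : α) : ![a,b,c,d,e,f,g,h] (0 : Fin 8) = a := rfl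
lemma vec8m_0 {α : Type*} (a b c d e f g h : α) : ![a,b,c,d,e,f,g,h] (⟨0, by omega⟩ : Fin 8) = a := rfl
lemma vec8_1 {α : Type*} (a b c d e f g h : α) : ![a,b,c,d,e,f,g,h] (1 : Fin 8) = b := rfl
lemma vec8m_1 {α : Type*} (a b c d e f g h : α) : ![a,b,c,d,e,f,g,h] (⟨1, by omega⟩ : Fin 8) = b := rfl
lemma vec8_2 {α : Type*} (a b c d e f g h : α) : ![a,b,c,d,e,f,g,h] (2 : Fin 8) = c := rfl
lemma vec8m_2 {α : Type*} (a b c d e f g h : α) : ![a,b,c,d,e,f,g,h] (⟨2, by omega⟩ : Fin 8) = c := rfl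
lemma vec8_3 {α : Type*} (a b c d e f g h : α) : ![a,b,c,d,e,f,g,h] (3 : Fin 8) = d := rfl
lemma vec8m_3 {α : Type*} (a b c d e f g h : α) : ![a,b,c,d,e,f,g,h] (⟨3, by omega⟩ : Fin 8) = d := rfl
lemma vec8_4 {α : Type*} (a b c d e f g h : α) : ![a,b,c,d,e,f,g,h] (4 : Fin 8) = e := rfl
lemma vec8m_4 {α : Type*} (a b c d e f g h : α) : ![a,b,c,d,e,f,g,h] (⟨4, by omega⟩ : Fin 8) = e := rfl
lemma vec8_5 {α : Type*} (a b c d e f g h : α) : ![a,b,c,d,e,f,g,h] (5 : Fin 8) = f := rfl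
lemma vec8m_5 {α : Type*} (a b c d e f g h : α) : ![a,b,c,d,e,f,g,h] (⟨5, by omega⟩ : Fin 8) = f := rfl
lemma vec8_6 {α : Type*} (a b c d e f g h : α) : ![a,b,c,d,e,f,g,h] (6 : Fin 8) = g := rfl
lemma vec8m_6 {α : Type*} (a b c d e f g h : α) : ![a,b,c,d,e,f,g,h] (⟨6, by omega⟩ : Fin 8) = g := rfl
lemma vec8_7 {α : Type*} (a b c d e f g h : α) : ![a,b,c,d,e,f,g,h] (7 : Fin 8) = h := rfl
lemma vec8m_7 {α : Type*} (a b c d e f g h : α) : ![a,b,c,d,e,f,g,h] (⟨7, by omega⟩ : Fin 8) = h := rfl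

lemma sign_neg_one : ((-1 : ℤ)).sign = -1 := rfl
lemma sign_one' : ((1 : ℤ)).sign = 1 := rfl

def Bm1 : Matrix (Fin 8) (Fin 8) ℤ :=
  !![0, 0, 1, 1, 0, 0, -1, -1;
     0, 0, 1, 1, 0, 0, -1, -1;
     -1, -1, 0, 0, -1, 1, 1, 1;
     -1, -1, 0, 0, -1, 1, 1, 1;
     0, 0, 1, 1, 0, 0, -1, -1;
     0, 0, -1, -1, 0, 0, 1, 1;
     1, 1, -1, -1, 1, -1, 0, 0;
     1, 1, -1, -1, 1, -1, 0, 0]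

def Xm1 : Fin 8 → K8 :=
  ![xv 0,
    xv 1,
    xv 2 * (1 + xv 4),
    xv 3 * (1 + xv 4),
    (xv 4)⁻¹,
    xv 5,
    xv 6 * (1 + (xv 4)⁻¹)⁻¹,
    xv 7 * (1 + (xv 4)⁻¹)⁻¹]

lemma stepB1 : mutB BXdP5 (4 : Fin 8) = Bm1 := by decide
lemma stepX1 : mutX BXdP5 xv (4 : Fin 8) = Xm1 := by
  funext j
  fin_cases j <;>
    simp only [mutX, Xm1, BXdP5, Matrix.of_apply, vec8_0, vec8m_0, vec8_1, vec8m_1, vec8_2, vec8m_2, vec8_3, vec8m_3, vec8_4, vec8m_4, vec8_5, vec8m_5, vec8_6, vec8m_6, vec8_7, vec8m_7,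
      sign_one', sign_neg_one, zpow_one, _root_.zpow_neg_one, zpow_zero, mul_one,
      Fin.isValue] <;>
    first
      | rfl
      | (rw [if_neg (by decide)]; rfl)
      | (rw [if_pos (by decide)]; rfl)

def Bm2 : Matrix (Fin 8) (Fin 8) ℤ :=
  !![0, 0, -1, -1, 0, 0, 1, 1;
     0, 0, 1, 1, 0, 0, -1, -1;
     1, -1, 0, 0, -1, 1, 0, 0;
     1, -1, 0, 0, -1, 1, 0, 0;
     0, 0, 1, 1, 0, 0, -1, -1;
     0, 0, -1, -1, 0, 0, 1, 1;
     -1, 1, 0, 0, 1, -1, 0, 0;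
     -1, 1, 0, 0, 1, -1, 0, 0]

def Xm2 : Fin 8 → K8 :=
  ![(xv 0)⁻¹,
    xv 1,
    xv 2 * (1 + xv 4) * (1 + (xv 0)⁻¹)⁻¹,
    xv 3 * (1 + xv 4) * (1 + (xv 0)⁻¹)⁻¹,
    (xv 4)⁻¹,
    xv 5,
    xv 6 * (1 + (xv 4)⁻¹)⁻¹ * (1 + xv 0),
    xv 7 * (1 + (xv 4)⁻¹)⁻¹ * (1 + xv 0)]

lemma stepB2 : mutB Bm1 (0 : Fin 8) = Bm2 := by decide
lemma stepX2 : mutX Bm1 Xm1 (0 : Fin 8) = Xm2 := by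
  funext j
  fin_cases j <;>
    simp only [mutX, Xm1, Xm2, Bm1, Matrix.of_apply, vec8_0, vec8m_0, vec8_1, vec8m_1, vec8_2, vec8m_2, vec8_3, vec8m_3, vec8_4, vec8m_4, vec8_5, vec8m_5, vec8_6, vec8m_6, vec8_7, vec8m_7,
      sign_one', sign_neg_one, zpow_one, _root_.zpow_neg_one, zpow_zero, mul_one,
      Fin.isValue] <;>
    first
      | rfl
      | (rw [if_neg (by decide)]; rfl)
      | (rw [if_pos (by decide)]; rfl)

def Bm3 : Matrix (Fin 8) (Fin 8) ℤ :=
  !![0, 0, -1, -1, 0, 0, 1, 1;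
     0, 0, 1, 1, 0, 0, -1, -1;
     1, -1, 0, 0, -1, -1, 1, 1;
     1, -1, 0, 0, -1, -1, 1, 1;
     0, 0, 1, 1, 0, 0, -1, -1;
     0, 0, 1, 1, 0, 0, -1, -1;
     -1, 1, -1, -1, 1, 1, 0, 0;
     -1, 1, -1, -1, 1, 1, 0, 0]

def Xm3 : Fin 8 → K8 :=
  ![(xv 0)⁻¹,
    xv 1,
    xv 2 * (1 + xv 4) * (1 + (xv 0)⁻¹)⁻¹ * (1 + xv 5),
    xv 3 * (1 + xv 4) * (1 + (xv 0)⁻¹)⁻¹ * (1 + xv 5),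
    (xv 4)⁻¹,
    (xv 5)⁻¹,
    xv 6 * (1 + (xv 4)⁻¹)⁻¹ * (1 + xv 0) * (1 + (xv 5)⁻¹)⁻¹,
    xv 7 * (1 + (xv 4)⁻¹)⁻¹ * (1 + xv 0) * (1 + (xv 5)⁻¹)⁻¹]

lemma stepB3 : mutB Bm2 (5 : Fin 8) = Bm3 := by decide
lemma stepX3 : mutX Bm2 Xm2 (5 : Fin 8) = Xm3 := by
  funext j
  fin_cases j <;>
    simp only [mutX, Xm2, Xm3, Bm2, Matrix.of_apply, vec8_0, vec8m_0, vec8_1, vec8m_1, vec8_2, vec8m_2, vec8_3, vec8m_3, vec8_4, vec8m_4, vec8_5, vec8m_5, vec8_6, vec8m_6, vec8_7, vec8m_7,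
      sign_one', sign_neg_one, zpow_one, _root_.zpow_neg_one, zpow_zero, mul_one,
      Fin.isValue] <;>
    first
      | rfl
      | (rw [if_neg (by decide)]; rfl)
      | (rw [if_pos (by decide)]; rfl)

def Bm4 : Matrix (Fin 8) (Fin 8) ℤ :=
  !![0, 0, -1, -1, 0, 0, 1, 1;
     0, 0, -1, -1, 0, 0, 1, 1;
     1, 1, 0, 0, -1, -1, 0, 0;
     1, 1, 0, 0, -1, -1, 0, 0;
     0, 0, 1, 1, 0, 0, -1, -1;
     0, 0, 1, 1, 0, 0, -1, -1;
     -1, -1, 0, 0, 1, 1, 0, 0;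
     -1, -1, 0, 0, 1, 1, 0, 0]

def Xm4 : Fin 8 → K8 :=
  ![(xv 0)⁻¹,
    (xv 1)⁻¹,
    xv 2 * (1 + xv 4) * (1 + (xv 0)⁻¹)⁻¹ * (1 + xv 5) * (1 + (xv 1)⁻¹)⁻¹,
    xv 3 * (1 + xv 4) * (1 + (xv 0)⁻¹)⁻¹ * (1 + xv 5) * (1 + (xv 1)⁻¹)⁻¹,
    (xv 4)⁻¹,
    (xv 5)⁻¹,
    xv 6 * (1 + (xv 4)⁻¹)⁻¹ * (1 + xv 0) * (1 + (xv 5)⁻¹)⁻¹ * (1 + xv 1),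
    xv 7 * (1 + (xv 4)⁻¹)⁻¹ * (1 + xv 0) * (1 + (xv 5)⁻¹)⁻¹ * (1 + xv 1)]

lemma stepB4 : mutB Bm3 (1 : Fin 8) = Bm4 := by decide
lemma stepX4 : mutX Bm3 Xm3 (1 : Fin 8) = Xm4 := by
  funext j
  fin_cases j <;>
    simp only [mutX, Xm3, Xm4, Bm3, Matrix.of_apply, vec8_0, vec8m_0, vec8_1, vec8m_1, vec8_2, vec8m_2, vec8_3, vec8m_3, vec8_4, vec8m_4, vec8_5, vec8m_5, vec8_6, vec8m_6, vec8_7, vec8m_7,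
      sign_one', sign_neg_one, zpow_one, _root_.zpow_neg_one, zpow_zero, mul_one,
      Fin.isValue] <;>
    first
      | rfl
      | (rw [if_neg (by decide)]; rfl)
      | (rw [if_pos (by decide)]; rfl)

def Bm5 : Matrix (Fin 8) (Fin 8) ℤ :=
  !![0, 0, -1, -1, 1, 1, -1, 1;
     0, 0, -1, -1, 1, 1, -1, 1;
     1, 1, 0, 0, -1, -1, 0, 0;
     1, 1, 0, 0, -1, -1, 0, 0;
     -1, -1, 1, 1, 0, 0, 1, -1;
     -1, -1, 1, 1, 0, 0, 1, -1;
     1, 1, 0, 0, -1, -1, 0, 0;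
     -1, -1, 0, 0, 1, 1, 0, 0]

def Xm5 : Fin 8 → K8 :=
  ![(xv 0)⁻¹ * (1 + xv 6 * (1 + (xv 4)⁻¹)⁻¹ * (1 + xv 0) * (1 + (xv 5)⁻¹)⁻¹ * (1 + xv 1)),
    (xv 1)⁻¹ * (1 + xv 6 * (1 + (xv 4)⁻¹)⁻¹ * (1 + xv 0) * (1 + (xv 5)⁻¹)⁻¹ * (1 + xv 1)),
    xv 2 * (1 + xv 4) * (1 + (xv 0)⁻¹)⁻¹ * (1 + xv 5) * (1 + (xv 1)⁻¹)⁻¹,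
    xv 3 * (1 + xv 4) * (1 + (xv 0)⁻¹)⁻¹ * (1 + xv 5) * (1 + (xv 1)⁻¹)⁻¹,
    (xv 4)⁻¹ * (1 + (xv 6 * (1 + (xv 4)⁻¹)⁻¹ * (1 + xv 0) * (1 + (xv 5)⁻¹)⁻¹ * (1 + xv 1))⁻¹)⁻¹,
    (xv 5)⁻¹ * (1 + (xv 6 * (1 + (xv 4)⁻¹)⁻¹ * (1 + xv 0) * (1 + (xv 5)⁻¹)⁻¹ * (1 + xv 1))⁻¹)⁻¹,
    (xv 6 * (1 + (xv 4)⁻¹)⁻¹ * (1 + xv 0) * (1 + (xv 5)⁻¹)⁻¹ * (1 + xv 1))⁻¹,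
    xv 7 * (1 + (xv 4)⁻¹)⁻¹ * (1 + xv 0) * (1 + (xv 5)⁻¹)⁻¹ * (1 + xv 1)]

lemma stepB5 : mutB Bm4 (6 : Fin 8) = Bm5 := by decide
lemma stepX5 : mutX Bm4 Xm4 (6 : Fin 8) = Xm5 := by
  funext j
  fin_cases j <;>
    simp only [mutX, Xm4, Xm5, Bm4, Matrix.of_apply, vec8_0, vec8m_0, vec8_1, vec8m_1, vec8_2, vec8m_2, vec8_3, vec8m_3, vec8_4, vec8m_4, vec8_5, vec8m_5, vec8_6, vec8m_6, vec8_7, vec8m_7,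
      sign_one', sign_neg_one, zpow_one, _root_.zpow_neg_one, zpow_zero, mul_one,
      Fin.isValue] <;>
    first
      | rfl
      | (rw [if_neg (by decide)]; rfl)
      | (rw [if_pos (by decide)]; rfl)

def Bm6 : Matrix (Fin 8) (Fin 8) ℤ :=
  !![0, 0, 1, -1, 0, 0, -1, 1;
     0, 0, 1, -1, 0, 0, -1, 1;
     -1, -1, 0, 0, 1, 1, 0, 0;
     1, 1, 0, 0, -1, -1, 0, 0;
     0, 0, -1, 1, 0, 0, 1, -1;
     0, 0, -1, 1, 0, 0, 1, -1;
     1, 1, 0, 0, -1, -1, 0, 0;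
     -1, -1, 0, 0, 1, 1, 0, 0]

def Xm6 : Fin 8 → K8 :=
  ![(xv 0)⁻¹ * (1 + xv 6 * (1 + (xv 4)⁻¹)⁻¹ * (1 + xv 0) * (1 + (xv 5)⁻¹)⁻¹ * (1 + xv 1)) * (1 + (xv 2 * (1 + xv 4) * (1 + (xv 0)⁻¹)⁻¹ * (1 + xv 5) * (1 + (xv 1)⁻¹)⁻¹)⁻¹)⁻¹,
    (xv 1)⁻¹ * (1 + xv 6 * (1 + (xv 4)⁻¹)⁻¹ * (1 + xv 0) * (1 + (xv 5)⁻¹)⁻¹ * (1 + xv 1)) * (1 + (xv 2 * (1 + xv 4) * (1 + (xv 0)⁻¹)⁻¹ * (1 + xv 5) * (1 + (xv 1)⁻¹)⁻¹)⁻¹)⁻¹,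
    (xv 2 * (1 + xv 4) * (1 + (xv 0)⁻¹)⁻¹ * (1 + xv 5) * (1 + (xv 1)⁻¹)⁻¹)⁻¹,
    xv 3 * (1 + xv 4) * (1 + (xv 0)⁻¹)⁻¹ * (1 + xv 5) * (1 + (xv 1)⁻¹)⁻¹,
    (xv 4)⁻¹ * (1 + (xv 6 * (1 + (xv 4)⁻¹)⁻¹ * (1 + xv 0) * (1 + (xv 5)⁻¹)⁻¹ * (1 + xv 1))⁻¹)⁻¹ * (1 + xv 2 * (1 + xv 4) * (1 + (xv 0)⁻¹)⁻¹ * (1 + xv 5) * (1 + (xv 1)⁻¹)⁻¹),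
    (xv 5)⁻¹ * (1 + (xv 6 * (1 + (xv 4)⁻¹)⁻¹ * (1 + xv 0) * (1 + (xv 5)⁻¹)⁻¹ * (1 + xv 1))⁻¹)⁻¹ * (1 + xv 2 * (1 + xv 4) * (1 + (xv 0)⁻¹)⁻¹ * (1 + xv 5) * (1 + (xv 1)⁻¹)⁻¹),
    (xv 6 * (1 + (xv 4)⁻¹)⁻¹ * (1 + xv 0) * (1 + (xv 5)⁻¹)⁻¹ * (1 + xv 1))⁻¹,
    xv 7 * (1 + (xv 4)⁻¹)⁻¹ * (1 + xv 0) * (1 + (xv 5)⁻¹)⁻¹ * (1 + xv 1)]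

lemma stepB6 : mutB Bm5 (2 : Fin 8) = Bm6 := by decide
lemma stepX6 : mutX Bm5 Xm5 (2 : Fin 8) = Xm6 := by
  funext j
  fin_cases j <;>
    simp only [mutX, Xm5, Xm6, Bm5, Matrix.of_apply, vec8_0, vec8m_0, vec8_1, vec8m_1, vec8_2, vec8m_2, vec8_3, vec8m_3, vec8_4, vec8m_4, vec8_5, vec8m_5, vec8_6, vec8m_6, vec8_7, vec8m_7,
      sign_one', sign_neg_one, zpow_one, _root_.zpow_neg_one, zpow_zero, mul_one,
      Fin.isValue] <;>
    first
      | rfl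
      | (rw [if_neg (by decide)]; rfl)
      | (rw [if_pos (by decide)]; rfl)

def Bm7 : Matrix (Fin 8) (Fin 8) ℤ :=
  !![0, 0, 1, -1, 1, 1, -1, -1;
     0, 0, 1, -1, 1, 1, -1, -1;
     -1, -1, 0, 0, 1, 1, 0, 0;
     1, 1, 0, 0, -1, -1, 0, 0;
     -1, -1, -1, 1, 0, 0, 1, 1;
     -1, -1, -1, 1, 0, 0, 1, 1;
     1, 1, 0, 0, -1, -1, 0, 0;
     1, 1, 0, 0, -1, -1, 0, 0]

def Xm7 : Fin 8 → K8 :=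
  ![(xv 0)⁻¹ * (1 + xv 6 * (1 + (xv 4)⁻¹)⁻¹ * (1 + xv 0) * (1 + (xv 5)⁻¹)⁻¹ * (1 + xv 1)) * (1 + (xv 2 * (1 + xv 4) * (1 + (xv 0)⁻¹)⁻¹ * (1 + xv 5) * (1 + (xv 1)⁻¹)⁻¹)⁻¹)⁻¹ * (1 + xv 7 * (1 + (xv 4)⁻¹)⁻¹ * (1 + xv 0) * (1 + (xv 5)⁻¹)⁻¹ * (1 + xv 1)),
    (xv 1)⁻¹ * (1 + xv 6 * (1 + (xv 4)⁻¹)⁻¹ * (1 + xv 0) * (1 + (xv 5)⁻¹)⁻¹ * (1 + xv 1)) * (1 + (xv 2 * (1 + xv 4) * (1 + (xv 0)⁻¹)⁻¹ * (1 + xv 5) * (1 + (xv 1)⁻¹)⁻¹)⁻¹)⁻¹ * (1 + xv 7 * (1 + (xv 4)⁻¹)⁻¹ * (1 + xv 0) * (1 + (xv 5)⁻¹)⁻¹ * (1 + xv 1)),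
    (xv 2 * (1 + xv 4) * (1 + (xv 0)⁻¹)⁻¹ * (1 + xv 5) * (1 + (xv 1)⁻¹)⁻¹)⁻¹,
    xv 3 * (1 + xv 4) * (1 + (xv 0)⁻¹)⁻¹ * (1 + xv 5) * (1 + (xv 1)⁻¹)⁻¹,
    (xv 4)⁻¹ * (1 + (xv 6 * (1 + (xv 4)⁻¹)⁻¹ * (1 + xv 0) * (1 + (xv 5)⁻¹)⁻¹ * (1 + xv 1))⁻¹)⁻¹ * (1 + xv 2 * (1 + xv 4) * (1 + (xv 0)⁻¹)⁻¹ * (1 + xv 5) * (1 + (xv 1)⁻¹)⁻¹) * (1 + (xv 7 * (1 + (xv 4)⁻¹)⁻¹ * (1 + xv 0) * (1 + (xv 5)⁻¹)⁻¹ * (1 + xv 1))⁻¹)⁻¹,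
    (xv 5)⁻¹ * (1 + (xv 6 * (1 + (xv 4)⁻¹)⁻¹ * (1 + xv 0) * (1 + (xv 5)⁻¹)⁻¹ * (1 + xv 1))⁻¹)⁻¹ * (1 + xv 2 * (1 + xv 4) * (1 + (xv 0)⁻¹)⁻¹ * (1 + xv 5) * (1 + (xv 1)⁻¹)⁻¹) * (1 + (xv 7 * (1 + (xv 4)⁻¹)⁻¹ * (1 + xv 0) * (1 + (xv 5)⁻¹)⁻¹ * (1 + xv 1))⁻¹)⁻¹,
    (xv 6 * (1 + (xv 4)⁻¹)⁻¹ * (1 + xv 0) * (1 + (xv 5)⁻¹)⁻¹ * (1 + xv 1))⁻¹,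
    (xv 7 * (1 + (xv 4)⁻¹)⁻¹ * (1 + xv 0) * (1 + (xv 5)⁻¹)⁻¹ * (1 + xv 1))⁻¹]

lemma stepB7 : mutB Bm6 (7 : Fin 8) = Bm7 := by decide
lemma stepX7 : mutX Bm6 Xm6 (7 : Fin 8) = Xm7 := by
  funext j
  fin_cases j <;>
    simp only [mutX, Xm6, Xm7, Bm6, Matrix.of_apply, vec8_0, vec8m_0, vec8_1, vec8m_1, vec8_2, vec8m_2, vec8_3, vec8m_3, vec8_4, vec8m_4, vec8_5, vec8m_5, vec8_6, vec8m_6, vec8_7, vec8m_7,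
      sign_one', sign_neg_one, zpow_one, _root_.zpow_neg_one, zpow_zero, mul_one,
      Fin.isValue] <;>
    first
      | rfl
      | (rw [if_neg (by decide)]; rfl)
      | (rw [if_pos (by decide)]; rfl)

def Bm8 : Matrix (Fin 8) (Fin 8) ℤ :=
  !![0, 0, 1, 1, 0, 0, -1, -1;
     0, 0, 1, 1, 0, 0, -1, -1;
     -1, -1, 0, 0, 1, 1, 0, 0;
     -1, -1, 0, 0, 1, 1, 0, 0;
     0, 0, -1, -1, 0, 0, 1, 1;
     0, 0, -1, -1, 0, 0, 1, 1;
     1, 1, 0, 0, -1, -1, 0, 0;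
     1, 1, 0, 0, -1, -1, 0, 0]

def Xm8 : Fin 8 → K8 :=
  ![(xv 0)⁻¹ * (1 + xv 6 * (1 + (xv 4)⁻¹)⁻¹ * (1 + xv 0) * (1 + (xv 5)⁻¹)⁻¹ * (1 + xv 1)) * (1 + (xv 2 * (1 + xv 4) * (1 + (xv 0)⁻¹)⁻¹ * (1 + xv 5) * (1 + (xv 1)⁻¹)⁻¹)⁻¹)⁻¹ * (1 + xv 7 * (1 + (xv 4)⁻¹)⁻¹ * (1 + xv 0) * (1 + (xv 5)⁻¹)⁻¹ * (1 + xv 1)) * (1 + (xv 3 * (1 + xv 4) * (1 + (xv 0)⁻¹)⁻¹ * (1 + xv 5) * (1 + (xv 1)⁻¹)⁻¹)⁻¹)⁻¹,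
    (xv 1)⁻¹ * (1 + xv 6 * (1 + (xv 4)⁻¹)⁻¹ * (1 + xv 0) * (1 + (xv 5)⁻¹)⁻¹ * (1 + xv 1)) * (1 + (xv 2 * (1 + xv 4) * (1 + (xv 0)⁻¹)⁻¹ * (1 + xv 5) * (1 + (xv 1)⁻¹)⁻¹)⁻¹)⁻¹ * (1 + xv 7 * (1 + (xv 4)⁻¹)⁻¹ * (1 + xv 0) * (1 + (xv 5)⁻¹)⁻¹ * (1 + xv 1)) * (1 + (xv 3 * (1 + xv 4) * (1 + (xv 0)⁻¹)⁻¹ * (1 + xv 5) * (1 + (xv 1)⁻¹)⁻¹)⁻¹)⁻¹,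
    (xv 2 * (1 + xv 4) * (1 + (xv 0)⁻¹)⁻¹ * (1 + xv 5) * (1 + (xv 1)⁻¹)⁻¹)⁻¹,
    (xv 3 * (1 + xv 4) * (1 + (xv 0)⁻¹)⁻¹ * (1 + xv 5) * (1 + (xv 1)⁻¹)⁻¹)⁻¹,
    (xv 4)⁻¹ * (1 + (xv 6 * (1 + (xv 4)⁻¹)⁻¹ * (1 + xv 0) * (1 + (xv 5)⁻¹)⁻¹ * (1 + xv 1))⁻¹)⁻¹ * (1 + xv 2 * (1 + xv 4) * (1 + (xv 0)⁻¹)⁻¹ * (1 + xv 5) * (1 + (xv 1)⁻¹)⁻¹) * (1 + (xv 7 * (1 + (xv 4)⁻¹)⁻¹ * (1 + xv 0) * (1 + (xv 5)⁻¹)⁻¹ * (1 + xv 1))⁻¹)⁻¹ * (1 + xv 3 * (1 + xv 4) * (1 + (xv 0)⁻¹)⁻¹ * (1 + xv 5) * (1 + (xv 1)⁻¹)⁻¹),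
    (xv 5)⁻¹ * (1 + (xv 6 * (1 + (xv 4)⁻¹)⁻¹ * (1 + xv 0) * (1 + (xv 5)⁻¹)⁻¹ * (1 + xv 1))⁻¹)⁻¹ * (1 + xv 2 * (1 + xv 4) * (1 + (xv 0)⁻¹)⁻¹ * (1 + xv 5) * (1 + (xv 1)⁻¹)⁻¹) * (1 + (xv 7 * (1 + (xv 4)⁻¹)⁻¹ * (1 + xv 0) * (1 + (xv 5)⁻¹)⁻¹ * (1 + xv 1))⁻¹)⁻¹ * (1 + xv 3 * (1 + xv 4) * (1 + (xv 0)⁻¹)⁻¹ * (1 + xv 5) * (1 + (xv 1)⁻¹)⁻¹),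
    (xv 6 * (1 + (xv 4)⁻¹)⁻¹ * (1 + xv 0) * (1 + (xv 5)⁻¹)⁻¹ * (1 + xv 1))⁻¹,
    (xv 7 * (1 + (xv 4)⁻¹)⁻¹ * (1 + xv 0) * (1 + (xv 5)⁻¹)⁻¹ * (1 + xv 1))⁻¹]

lemma stepB8 : mutB Bm7 (3 : Fin 8) = Bm8 := by decide
lemma stepX8 : mutX Bm7 Xm7 (3 : Fin 8) = Xm8 := by
  funext j
  fin_cases j <;>
    simp only [mutX, Xm7, Xm8, Bm7, Matrix.of_apply, vec8_0, vec8m_0, vec8_1, vec8m_1, vec8_2, vec8m_2, vec8_3, vec8m_3, vec8_4, vec8m_4, vec8_5, vec8m_5, vec8_6, vec8m_6, vec8_7, vec8m_7,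
      sign_one', sign_neg_one, zpow_one, _root_.zpow_neg_one, zpow_zero, mul_one,
      Fin.isValue] <;>
    first
      | rfl
      | (rw [if_neg (by decide)]; rfl)
      | (rw [if_pos (by decide)]; rfl)


lemma xv_ne (i : Fin 8) : xv i ≠ 0 := by
  rw [xv, Ne, IsFractionRing.to_map_eq_zero_iff]
  exact MvPolynomial.X_ne_zero i

lemma poly_one_add_ne (i : Fin 8) : (1 + MvPolynomial.X i : MvPolynomial (Fin 8) ℚ) ≠ 0 := by
  intro h
  have := congrArg MvPolynomial.constantCoeff h
  simp at this

lemma one_add_xv_ne (i : Fin 8) : (1 : K8) + xv i ≠ 0 := by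
  have : (1 : K8) + xv i = algebraMap (MvPolynomial (Fin 8) ℚ) K8 (1 + MvPolynomial.X i) := by
    simp [xv]
  rw [this, Ne, IsFractionRing.to_map_eq_zero_iff]
  exact poly_one_add_ne i

lemma one_add_inv_xv_ne (i : Fin 8) : (1 : K8) + (xv i)⁻¹ ≠ 0 := by
  have h := xv_ne i
  have : (1 : K8) + (xv i)⁻¹ = (xv i + 1) / xv i := by field_simp
  rw [this]
  exact div_ne_zero (by rw [add_comm]; exact one_add_xv_ne i) h

lemma resX_eq : resX = (Bm8, Xm8) := by
  show List.foldl mutStepX (BXdP5, xv) muSeqX = _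
  rw [muSeqX]
  simp only [List.foldl_cons, List.foldl_nil, mutStepX,
    stepB1, stepX1, stepB2, stepX2, stepB3, stepX3, stepB4, stepX4,
    stepB5, stepX5, stepB6, stepX6, stepB7, stepX7, stepB8, stepX8]

/-- The action of the q-Painlevé VI time evolution T₁ on the X-cluster variables at nodes
3, 4, 7, 8 of the local dP₅ quiver. -/
theorem stmt_5 :
    resX.2 (ρX 2) = (1 + (xv 0)⁻¹) * (1 + (xv 1)⁻¹) / (xv 3 * (1 + xv 4) * (1 + xv 5)) ∧
    resX.2 (ρX 3) = (1 + (xv 0)⁻¹) * (1 + (xv 1)⁻¹) / (xv 2 * (1 + xv 4) * (1 + xv 5)) ∧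
    resX.2 (ρX 6) = (1 + (xv 4)⁻¹) * (1 + (xv 5)⁻¹) / (xv 7 * (1 + xv 0) * (1 + xv 1)) ∧
    resX.2 (ρX 7) = (1 + (xv 4)⁻¹) * (1 + (xv 5)⁻¹) / (xv 6 * (1 + xv 0) * (1 + xv 1))     := by
  have h2 : resX.2 = Xm8 := by rw [resX_eq]
  have hx := xv_ne
  have h1x := one_add_xv_ne
  have hxi : ∀ i : Fin 8, (1 : K8) + (xv i)⁻¹ = (1 + xv i) / xv i := fun i => by
    rw [eq_div_iff (hx i), add_mul, one_mul, inv_mul_cancel₀ (hx i), add_comm]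
  refine ⟨?_, ?_, ?_, ?_⟩ <;>
  · rw [h2]
    simp only [ρX, Xm8, vec8_0, vec8_1, vec8_2, vec8_3, vec8_4, vec8_5, vec8_6, vec8_7,
      vec8m_0, vec8m_1, vec8m_2, vec8m_3, vec8m_4, vec8m_5, vec8m_6, vec8m_7]
    simp only [mul_inv, inv_inv, div_eq_mul_inv]
    ring

end
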